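/- arXiv:1512.05601 — 7 statements merged into one kernel-verified Lean document; each statement's English description precedes it below -/
import Mathlib

section
/- For a fixed integer m ≥ 2, the number c_m(n) of restricted m-ary partitions of n (partitions of n into powers of m such that whenever m^i is a part, all of 1, m, m^2, ..., m^{i-1} are also parts) satisfies c_m(m^3·n + m^2) ≡ 0 (mod m) for all n ≥ 0, whether m is odd or even. -/
/-- The number of restricted `m`-ary partitions of `n`: partitions of `n` into
powers of `m` such that whenever `m ^ i` is a part, all of `m ^ 0, …, m ^ (i-1)`
are also parts. -/
noncomputable def restrictedMaryCount (m n : ℕ) : ℕ :=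
  Nat.card {P : Nat.Partition n //
    (∀ x ∈ P.parts, ∃ i, x = m ^ i) ∧
    ∀ i, m ^ i ∈ P.parts → ∀ j < i, m ^ j ∈ P.parts}

set_option linter.unusedSectionVars false


open Finset

def d (m : ℕ) : ℕ → ℕ
  | 0 => 1
  | (n+1) => ∑ t ∈ (Finset.range (n / m + 1)).attach, d m t.1
  decreasing_by
    exact Nat.lt_succ_of_le (le_trans (Finset.mem_range_succ_iff.mp t.2) (Nat.div_le_self n m))

def D (m N : ℕ) : ℕ := ∑ t ∈ Finset.range N, d m t

lemma d_zero (m : ℕ) : d m 0 = 1 := by rw [d]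

lemma d_succ (m n : ℕ) : d m (n+1) = D m (n / m + 1) := by
  rw [d, D]
  exact Finset.sum_attach _ _

lemma D_succ_eq (m N : ℕ) : D m (N+1) = 1 + ∑ s ∈ Finset.range N, D m (s / m + 1) := by
  rw [D, Finset.sum_range_succ']
  simp only [d_zero, d_succ]
  ring

lemma sum_div_blocks (m : ℕ) (hm : 0 < m) (g : ℕ → ℕ) (N : ℕ) :
    ∑ s ∈ Finset.range N, g (s / m)
      = m * ∑ u ∈ Finset.range (N / m), g u + (N % m) * g (N / m) := by
  induction N with
  | zero => simp
  | succ N ih =>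
    rw [Finset.sum_range_succ, ih]
    have hmod := Nat.mod_lt N hm
    have hNd := Nat.div_add_mod N m
    rcases Nat.lt_or_ge (N % m + 1) m with h | h
    · have e : N + 1 = m * (N / m) + (N % m + 1) := by omega
      have h1 : (N+1) / m = N / m := by
        rw [e, Nat.mul_add_div hm, Nat.div_eq_of_lt h, Nat.add_zero]
      have h2 : (N+1) % m = N % m + 1 := by
        rw [e, Nat.mul_add_mod, Nat.mod_eq_of_lt h]
      rw [h1, h2]; ring
    · have h : N % m + 1 = m := by omega
      have e : N + 1 = m * (N / m) + m := by omega
      have h1 : (N+1) / m = N / m + 1 := by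
        rw [e, Nat.mul_add_div hm, Nat.div_self hm]
      have h2 : (N+1) % m = 0 := by
        rw [e, Nat.mul_add_mod, Nat.mod_self]
      rw [h1, h2, Finset.sum_range_succ]
      generalize g (N / m) = G
      generalize (∑ u ∈ Finset.range (N / m), g u) = S
      set r := N % m with hr
      rw [← h]
      ring

lemma D_mul_succ (m : ℕ) (hm : 0 < m) (n : ℕ) : D m (m * n + 1) ≡ 1 [MOD m] := by
  rw [D_succ_eq, sum_div_blocks m hm (fun u => D m (u + 1)) (m * n),
    Nat.mul_div_cancel_left n hm, Nat.mul_mod_right, zero_mul, add_zero]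
  calc 1 + m * ∑ u ∈ Finset.range n, D m (u + 1)
      ≡ 1 + 0 [MOD m] :=
        Nat.ModEq.add_left 1 (Nat.modEq_zero_iff_dvd.mpr (dvd_mul_right m _))
    _ = 1 := by ring

lemma d_key (m : ℕ) (hm : 2 ≤ m) (n : ℕ) : d m (m ^ 3 * n + m ^ 2) ≡ 0 [MOD m] := by
  obtain ⟨r, rfl⟩ : ∃ r, m = r + 1 := ⟨m - 1, by omega⟩
  have hm0 : 0 < r + 1 := by omega
  have hrm : r < r + 1 := by omega
  have hM : (r+1) ^ 3 * n + (r+1) ^ 2 = ((r+1) * ((r+1) ^ 2 * n + r) + r) + 1 := by ring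
  rw [hM, d_succ]
  have h1 : ((r+1) * ((r+1) ^ 2 * n + r) + r) / (r+1) = (r+1) ^ 2 * n + r := by
    rw [Nat.mul_add_div hm0, Nat.div_eq_of_lt hrm, Nat.add_zero]
  rw [h1, D_succ_eq, sum_div_blocks (r+1) hm0 (fun u => D (r+1) (u + 1)) _]
  have e : (r+1) ^ 2 * n + r = (r+1) * ((r+1) * n) + r := by ring
  have h3 : ((r+1) ^ 2 * n + r) / (r+1) = (r+1) * n := by
    rw [e, Nat.mul_add_div hm0, Nat.div_eq_of_lt hrm, Nat.add_zero]
  have h4 : ((r+1) ^ 2 * n + r) % (r+1) = r := by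
    rw [e, Nat.mul_add_mod, Nat.mod_eq_of_lt hrm]
  rw [h3, h4]
  have h5 := D_mul_succ (r+1) hm0 n
  calc 1 + ((r+1) * ∑ u ∈ Finset.range ((r+1) * n), D (r+1) (u + 1)
        + r * D (r+1) ((r+1) * n + 1))
      ≡ 1 + (0 + r * 1) [MOD r+1] :=
        Nat.ModEq.add_left 1
          (Nat.ModEq.add (Nat.modEq_zero_iff_dvd.mpr (dvd_mul_right _ _))
            (h5.mul_left r))
    _ = r + 1 := by ring
    _ ≡ 0 [MOD r+1] := Nat.modEq_zero_iff_dvd.mpr dvd_rfl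

open Multiset

section Comb

variable (m : ℕ)

/-- The restrictedness predicate. -/
def RProp {n : ℕ} (P : Nat.Partition n) : Prop :=
  (∀ x ∈ P.parts, ∃ i, x = m ^ i) ∧ ∀ i, m ^ i ∈ P.parts → ∀ j < i, m ^ j ∈ P.parts

variable {m}
variable (hm : 2 ≤ m)
include hm

lemma pow_ne_one {i : ℕ} (hi : 1 ≤ i) : m ^ i ≠ 1 :=
  Nat.ne_of_gt (Nat.one_lt_pow (by omega) (by omega))

lemma pow_inj {i j : ℕ} (h : m ^ i = m ^ j) : i = j :=
  Nat.pow_right_injective hm h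

lemma pow_succ_div (i : ℕ) : m ^ (i + 1) / m = m ^ i := by
  rw [pow_succ']
  exact Nat.mul_div_cancel_left _ (by omega)

lemma mul_sum_map_div (s : Multiset ℕ) (h : ∀ x ∈ s, m ∣ x) :
    m * (s.map (· / m)).sum = s.sum := by
  induction s using Multiset.induction with
  | empty => simp
  | cons a s ih =>
    simp only [Multiset.map_cons, Multiset.sum_cons, Nat.mul_add]
    rw [ih (fun x hx => h x (Multiset.mem_cons_of_mem hx)),
      Nat.mul_div_cancel' (h a (Multiset.mem_cons_self a s))]

/-- the "strip ones and divide by m" multiset -/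
def down {n : ℕ} (P : Nat.Partition n) : Multiset ℕ :=
  (P.parts.filter (· ≠ 1)).map (· / m)

omit hm in
lemma mem_filter_ne_one {n : ℕ} {P : Nat.Partition n} {x : ℕ} :
    x ∈ P.parts.filter (· ≠ 1) ↔ x ∈ P.parts ∧ x ≠ 1 := by
  simp [Multiset.mem_filter]

omit hm in
lemma filter_pow {n : ℕ} {P : Nat.Partition n} (hP : RProp m P) {x : ℕ}
    (hx : x ∈ P.parts.filter (· ≠ 1)) : ∃ i, x = m ^ (i + 1) := by
  obtain ⟨hx1, hx2⟩ := mem_filter_ne_one.mp hx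
  obtain ⟨i, rfl⟩ := hP.1 x hx1
  cases i with
  | zero => simp at hx2
  | succ i => exact ⟨i, rfl⟩

lemma mem_down_iff {n : ℕ} {P : Nat.Partition n} (hP : RProp m P) {j : ℕ} :
    m ^ j ∈ down (m := m) P ↔ m ^ (j + 1) ∈ P.parts := by
  constructor
  · intro h
    obtain ⟨x, hx, hxe⟩ := Multiset.mem_map.mp h
    obtain ⟨i, rfl⟩ := filter_pow hP hx
    rw [pow_succ_div hm] at hxe
    have := pow_inj hm hxe
    subst this
    exact (mem_filter_ne_one.mp hx).1
  · intro h
    exact Multiset.mem_map.mpr ⟨m ^ (j + 1), mem_filter_ne_one.mpr ⟨h, pow_ne_one hm (by omega)⟩,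
      pow_succ_div hm j⟩

lemma down_pos {n : ℕ} {P : Nat.Partition n} (hP : RProp m P) {x : ℕ}
    (hx : x ∈ down (m := m) P) : 0 < x := by
  obtain ⟨y, hy, rfl⟩ := Multiset.mem_map.mp hx
  obtain ⟨i, rfl⟩ := filter_pow hP hy
  rw [pow_succ_div hm]
  exact Nat.pow_pos (by omega)

lemma down_powers {n : ℕ} {P : Nat.Partition n} (hP : RProp m P) {x : ℕ}
    (hx : x ∈ down (m := m) P) : ∃ i, x = m ^ i := by
  obtain ⟨y, hy, rfl⟩ := Multiset.mem_map.mp hx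
  obtain ⟨i, rfl⟩ := filter_pow hP hy
  exact ⟨i, pow_succ_div hm i⟩

lemma down_gaps {n : ℕ} {P : Nat.Partition n} (hP : RProp m P) :
    ∀ i, m ^ i ∈ down (m := m) P → ∀ j < i, m ^ j ∈ down (m := m) P := by
  intro i hi j hj
  rw [mem_down_iff hm hP] at hi ⊢
  exact hP.2 (i + 1) hi (j + 1) (by omega)

omit hm in
lemma one_mem {n : ℕ} {P : Nat.Partition (n + 1)} (hP : RProp m P) : 1 ∈ P.parts := by
  have hne : P.parts ≠ 0 := by
    intro h
    have := P.parts_sum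
    rw [h] at this
    simp at this
  obtain ⟨x, hx⟩ := Multiset.exists_mem_of_ne_zero hne
  obtain ⟨i, rfl⟩ := hP.1 x hx
  cases i with
  | zero => simpa using hx
  | succ i =>
    have := hP.2 (i + 1) hx 0 (by omega)
    simpa using this

lemma sum_decomp {n : ℕ} {P : Nat.Partition n} (hP : RProp m P) :
    n = P.parts.count 1 + m * (down (m := m) P).sum := by
  have hdvd : ∀ x ∈ P.parts.filter (· ≠ 1), m ∣ x := by
    intro x hx
    obtain ⟨i, rfl⟩ := filter_pow hP hx
    exact ⟨m ^ i, by rw [pow_succ]; ring⟩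
  rw [down, mul_sum_map_div hm _ hdvd]
  have h1 : P.parts.filter (· = 1) + P.parts.filter (· ≠ 1) = P.parts := by
    have := Multiset.filter_add_not (· = 1) P.parts
    convert this using 2
  have h2 : (P.parts.filter (· = 1)).sum = P.parts.count 1 := by
    rw [Multiset.filter_eq', Multiset.sum_replicate, smul_eq_mul, mul_one]
  calc n = P.parts.sum := P.parts_sum.symm
    _ = (P.parts.filter (· = 1) + P.parts.filter (· ≠ 1)).sum := by rw [h1]
    _ = P.parts.count 1 + (P.parts.filter (· ≠ 1)).sum := by rw [Multiset.sum_add, h2]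

omit hm in
lemma sum_map_mul (s : Multiset ℕ) : (s.map (· * m)).sum = s.sum * m := by
  induction s using Multiset.induction with
  | empty => simp
  | cons a s ih => simp [ih, Nat.add_mul]

/-- multiply by m and append `a` ones -/
def up {t : ℕ} (Q : Nat.Partition t) (a : ℕ) : Multiset ℕ :=
  Q.parts.map (· * m) + Multiset.replicate a 1

lemma up_sum {t : ℕ} (Q : Nat.Partition t) (a : ℕ) :
    (up (m := m) Q a).sum = t * m + a := by
  rw [up, Multiset.sum_add, sum_map_mul, Multiset.sum_replicate, smul_eq_mul, mul_one,
    Q.parts_sum]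

lemma up_pos {t : ℕ} (Q : Nat.Partition t) (a : ℕ) {x : ℕ} (hx : x ∈ up (m := m) Q a) :
    0 < x := by
  rw [up, Multiset.mem_add] at hx
  rcases hx with hx | hx
  · obtain ⟨y, hy, rfl⟩ := Multiset.mem_map.mp hx
    exact Nat.mul_pos (Q.parts_pos hy) (by omega)
  · rw [Multiset.eq_of_mem_replicate hx]; omega

omit hm in
lemma mul_mem_up {t : ℕ} (Q : Nat.Partition t) (a : ℕ) {y : ℕ} (hy : y ∈ Q.parts) :
    y * m ∈ up (m := m) Q a :=
  Multiset.mem_add.mpr (Or.inl (Multiset.mem_map.mpr ⟨y, hy, rfl⟩))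

omit hm in
lemma up_powers {t : ℕ} {Q : Nat.Partition t} (hQ : RProp m Q) (a : ℕ) {x : ℕ}
    (hx : x ∈ up (m := m) Q a) : ∃ i, x = m ^ i := by
  rw [up, Multiset.mem_add] at hx
  rcases hx with hx | hx
  · obtain ⟨y, hy, rfl⟩ := Multiset.mem_map.mp hx
    obtain ⟨i, rfl⟩ := hQ.1 y hy
    exact ⟨i + 1, (pow_succ m i).symm⟩
  · exact ⟨0, by rw [Multiset.eq_of_mem_replicate hx, pow_zero]⟩

lemma up_gaps {t : ℕ} {Q : Nat.Partition t} (hQ : RProp m Q) {a : ℕ} (ha : 1 ≤ a) :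
    ∀ i, m ^ i ∈ up (m := m) Q a → ∀ j < i, m ^ j ∈ up (m := m) Q a := by
  intro i hi j hj
  cases j with
  | zero =>
    rw [pow_zero, up, Multiset.mem_add]
    exact Or.inr (Multiset.mem_replicate.mpr ⟨by omega, rfl⟩)
  | succ k =>
    rw [up, Multiset.mem_add] at hi
    rcases hi with hi | hi
    · obtain ⟨y, hy, hye⟩ := Multiset.mem_map.mp hi
      obtain ⟨l, rfl⟩ := hQ.1 y hy
      rw [← pow_succ] at hye
      have hli : l + 1 = i := pow_inj hm hye
      have hk : m ^ k ∈ Q.parts := hQ.2 l hy k (by omega)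
      have := mul_mem_up (m := m) Q a hk
      rwa [← pow_succ] at this
    · exfalso
      exact pow_ne_one hm (by omega : 1 ≤ i) (Multiset.eq_of_mem_replicate hi)

lemma down_up {t : ℕ} (Q : Nat.Partition t) (a : ℕ) :
    ((up (m := m) Q a).filter (· ≠ 1)).map (· / m) = Q.parts := by
  have h1 : (up (m := m) Q a).filter (· ≠ 1) = Q.parts.map (· * m) := by
    rw [up, Multiset.filter_add, Multiset.filter_eq_self.mpr, Multiset.filter_eq_nil.mpr,
      add_zero]
    · intro x hx
      rw [Multiset.eq_of_mem_replicate hx]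
      simp
    · intro x hx
      obtain ⟨y, hy, rfl⟩ := Multiset.mem_map.mp hx
      have := Q.parts_pos hy
      have : m ≤ y * m := Nat.le_mul_of_pos_left m this
      omega
  rw [h1, Multiset.map_map]
  have : ∀ y ∈ Q.parts, ((· / m) ∘ (· * m)) y = id y := by
    intro y _
    simp only [Function.comp_apply, id_eq]
    exact Nat.mul_div_cancel y (by omega : 0 < m)
  rw [Multiset.map_congr rfl this, Multiset.map_id]


/-- partition of `t` obtained by stripping ones and dividing by `m`. -/
def downPartition {n t : ℕ} (P : Nat.Partition n) (hP : RProp m P)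
    (hs : (down (m := m) P).sum = t) : Nat.Partition t where
  parts := down (m := m) P
  parts_pos := fun hx => down_pos hm hP hx
  parts_sum := hs

/-- partition of `n+1` obtained by multiplying by `m` and appending ones. -/
def upPartition {t : ℕ} (n : ℕ) (hmt : t * m ≤ n) (Q : Nat.Partition t) :
    Nat.Partition (n + 1) where
  parts := up (m := m) Q (n + 1 - t * m)
  parts_pos := fun hx => up_pos hm Q _ hx
  parts_sum := by rw [up_sum hm]; omega

lemma down_upPartition {t : ℕ} (n : ℕ) (hmt : t * m ≤ n) (Q : Nat.Partition t) :
    down (m := m) (upPartition hm n hmt Q) = Q.parts :=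
  down_up hm Q _

lemma up_down {n : ℕ} {P : Nat.Partition (n + 1)} (hP : RProp m P) :
    (down (m := m) P).map (· * m) + Multiset.replicate (P.parts.count 1) 1 = P.parts := by
  have h1 : (down (m := m) P).map (· * m) = P.parts.filter (· ≠ 1) := by
    rw [down, Multiset.map_map]
    have : ∀ x ∈ P.parts.filter (· ≠ 1), ((· * m) ∘ (· / m)) x = id x := by
      intro x hx
      obtain ⟨i, rfl⟩ := filter_pow hP hx
      simp only [Function.comp_apply, id_eq]
      rw [pow_succ_div hm, ← pow_succ]
    rw [Multiset.map_congr rfl this, Multiset.map_id]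
  have h2 : Multiset.replicate (P.parts.count 1) 1 = P.parts.filter (· = 1) :=
    (Multiset.filter_eq' P.parts 1).symm
  rw [h1, h2]
  have h3 := Multiset.filter_add_not (· = 1) P.parts
  rw [add_comm]
  convert h3 using 2

/-- the key bijection: restricted partitions of `n+1` whose stripped sum is `t`
are in bijection with restricted partitions of `t`. -/
def fiberEquiv (n t : ℕ) (ht : t ≤ n / m) :
    {X : {P : Nat.Partition (n + 1) // RProp m P} // (down (m := m) X.1).sum = t} ≃
      {Q : Nat.Partition t // RProp m Q} where
  toFun X := ⟨downPartition hm X.1.1 X.1.2 X.2,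
    fun _ hx => down_powers hm X.1.2 hx, down_gaps hm X.1.2⟩
  invFun Q :=
    have hmt : t * m ≤ n := (Nat.le_div_iff_mul_le (by omega : 0 < m)).mp ht
    ⟨⟨upPartition hm n hmt Q.1,
      fun _ hx => up_powers Q.2 _ hx,
      up_gaps hm Q.2 (by omega : 1 ≤ n + 1 - t * m)⟩,
      by rw [show down (m := m) (upPartition hm n hmt Q.1) = Q.1.parts from
          down_upPartition hm n hmt Q.1]; exact Q.1.parts_sum⟩
  left_inv := by
    rintro ⟨⟨P, hP⟩, hs⟩
    apply Subtype.ext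
    apply Subtype.ext
    apply Nat.Partition.ext
    show up (m := m) (downPartition hm P hP hs) (n + 1 - t * m) = P.parts
    have hd := sum_decomp hm hP
    rw [hs] at hd
    have hcm : m * t = t * m := mul_comm m t
    have hcount : n + 1 - t * m = P.parts.count 1 := by omega
    rw [up, hcount]
    exact up_down hm hP
  right_inv := by
    rintro ⟨Q, hQ⟩
    apply Subtype.ext
    apply Nat.Partition.ext
    exact down_upPartition hm n ((Nat.le_div_iff_mul_le (by omega : 0 < m)).mp ht) Q

omit hm in
lemma rprop_zero (P : Nat.Partition 0) : RProp m P := by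
  have hp : P.parts = 0 := by
    rw [Multiset.eq_zero_iff_forall_notMem]
    intro x hx
    have h1 := P.parts_pos hx
    have h2 : x ≤ P.parts.sum := Multiset.le_sum_of_mem hx
    rw [P.parts_sum] at h2
    omega
  constructor
  · intro x hx; rw [hp] at hx; simp at hx
  · intro i hi; rw [hp] at hi; simp at hi

omit hm in
lemma card_zero : Nat.card {P : Nat.Partition 0 // RProp m P} = 1 := by
  haveI : Unique {P : Nat.Partition 0 // RProp m P} :=
    { default := ⟨default, rprop_zero _⟩
      uniq := fun X => Subtype.ext (Subsingleton.elim _ _) }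
  exact Nat.card_unique

lemma card_succ (n : ℕ) :
    Nat.card {P : Nat.Partition (n + 1) // RProp m P}
      = ∑ t ∈ Finset.range (n / m + 1), Nat.card {Q : Nat.Partition t // RProp m Q} := by
  classical
  rw [Nat.card_eq_fintype_card, ← Finset.card_univ,
    Finset.card_eq_sum_card_fiberwise
      (f := fun X : {P : Nat.Partition (n + 1) // RProp m P} => (down (m := m) X.1).sum)
      (t := Finset.range (n / m + 1)) ?_]
  · refine Finset.sum_congr rfl fun t htm => ?_
    have ht : t ≤ n / m := Finset.mem_range_succ_iff.mp htm
    calc (Finset.univ.filter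
          fun X : {P : Nat.Partition (n + 1) // RProp m P} => (down (m := m) X.1).sum = t).card
        = Fintype.card {X : {P : Nat.Partition (n + 1) // RProp m P} //
            (down (m := m) X.1).sum = t} := (Fintype.card_subtype _).symm
      _ = Nat.card {X : {P : Nat.Partition (n + 1) // RProp m P} //
            (down (m := m) X.1).sum = t} := (Nat.card_eq_fintype_card).symm
      _ = Nat.card {Q : Nat.Partition t // RProp m Q} := Nat.card_congr (fiberEquiv hm n t ht)
  · intro X _
    rw [Finset.mem_coe, Finset.mem_range_succ_iff, Nat.le_div_iff_mul_le (by omega : 0 < m)]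
    show (down (m := m) X.1).sum * m ≤ n
    have hd := sum_decomp hm X.2
    have h1 : (1 : ℕ) ∈ X.1.parts := one_mem X.2
    have hc : 0 < X.1.parts.count 1 := Multiset.count_pos.mpr h1
    have hcm : m * (down (m := m) X.1).sum = (down (m := m) X.1).sum * m := mul_comm _ _
    omega

omit hm in
lemma rmc_eq (n : ℕ) :
    restrictedMaryCount m n = Nat.card {P : Nat.Partition n // RProp m P} := rfl

lemma count_eq_d (n : ℕ) : restrictedMaryCount m n = d m n := by
  induction n using Nat.strong_induction_on with
  | _ n ih =>
    match n with
    | 0 => rw [rmc_eq, _root_.card_zero, d_zero]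
    | (k + 1) =>
      rw [rmc_eq, card_succ hm k, d_succ, D]
      refine Finset.sum_congr rfl fun t htm => ?_
      rw [← rmc_eq]
      refine ih t ?_
      have h1 := Finset.mem_range_succ_iff.mp htm
      have h2 := Nat.div_le_self k m
      omega

end Comb

theorem stmt_0 (m : ℕ) (hm : 2 ≤ m) (n : ℕ) :
    restrictedMaryCount m (m ^ 3 * n + m ^ 2) ≡ 0 [MOD m] := by
  rw [count_eq_d hm]
  exact d_key m hm n
end

section
/- Let m ≥ 2 and define integers s_{j,i} by binomial(km+1, j) = Σ_{i=0}^j s_{j,i}·binomial(k, i) for all k. Then for every i ≥ 1, s_{i+1,i} = i·(m-1)/2 · m^i + m^i; equivalently 2·s_{i+1,i} = i·(m-1)·m^i + 2·m^i. -/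
/-!
Newton's forward-difference formula identifies `s j i` with `Δ^i (k ↦ C(km+1, j))` at `0`.
Since `C(km, d)` is the `X^d`-coefficient of the geometric sequence `((X+1)^m)^k`, whose `i`-th
difference at `0` is `((X+1)^m - 1)^i`, and `C(km+1, i+1) = C(km, i) + C(km, i+1)`, the number
`s (i+1) i` is the sum of the coefficients of `X^i` and `X^(i+1)` in
`((X+1)^m - 1)^i = X^i (m + C(m,2) X + ⋯)^i`, that is `m^i + i m^(i-1) C(m,2)`.
-/

open Polynomial Finset fwdDiff

lemma fwdDiff_iter_addMonoidHom_comp {M G H : Type*} [AddCommMonoid M] [AddCommGroup G]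
    [AddCommGroup H] (L : G →+ H) (h : M) (f : M → G) (n : ℕ) (y : M) :
    (Δ_[h])^[n] (L ∘ f) y = L ((Δ_[h])^[n] f y) := by
  simp [fwdDiff_iter_eq_sum_shift, map_sum, map_zsmul]

lemma fwdDiff_iter_pow_apply_zero {A : Type*} [CommRing A] (a : A) (n : ℕ) :
    (Δ_[1])^[n] (fun k : ℕ ↦ a ^ k) 0 = (a - 1) ^ n := by
  simpa using fwdDiff_addChar_eq ⟨fun k ↦ a ^ k, pow_zero a, pow_add a⟩ 0 1 n

lemma fwdDiff_iter_apply_zero_of_eq_sum_mul_choose {f a : ℕ → ℤ} {n i : ℕ}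
    (hf : ∀ k, f k = ∑ j ∈ range n, a j * k.choose j) (hi : i < n) :
    (Δ_[1])^[i] f 0 = a i := by
  have hf' : f = ∑ j ∈ range n, a j • fun k : ℕ ↦ (k.choose j : ℤ) := by
    ext k; simp [hf]
  rw [hf', fwdDiff_iter_finsetSum, Finset.sum_apply]
  simp only [fwdDiff_iter_const_smul, Pi.smul_apply, fwdDiff_iter_choose_zero, smul_eq_mul,
    mul_ite, mul_one, mul_zero, Finset.sum_ite_eq, mem_range, if_pos hi]

lemma fwdDiff_iter_choose_mul_apply_zero (m n d : ℕ) :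
    (Δ_[1])^[n] (fun k : ℕ ↦ ((k * m).choose d : ℤ)) 0 =
      (((X + 1 : ℤ[X]) ^ m - 1) ^ n).coeff d := by
  have h : (fun k : ℕ ↦ ((k * m).choose d : ℤ)) = lcoeff ℤ d ∘ fun k ↦ ((X + 1) ^ m) ^ k := by
    ext k; simp [← pow_mul, coeff_X_add_one_pow, mul_comm]
  rw [h, ← fwdDiff_iter_pow_apply_zero]
  exact fwdDiff_iter_addMonoidHom_comp (lcoeff ℤ d).toAddMonoidHom 1 _ n 0

lemma two_mul_sum_range_natCast {R : Type*} [CommRing R] (m : ℕ) :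
    2 * ∑ k ∈ range m, (k : R) = m * (m - 1) := by
  induction m with
  | zero => simp
  | succ m ih => rw [sum_range_succ, mul_add, ih]; push_cast; ring

namespace Polynomial

variable {R : Type*} [CommRing R]

lemma coeff_zero_pow (p : R[X]) (n : ℕ) : (p ^ n).coeff 0 = p.coeff 0 ^ n := by
  simp [coeff_zero_eq_eval_zero]

lemma coeff_one_pow (p : R[X]) (n : ℕ) :
    (p ^ n).coeff 1 = n * p.coeff 0 ^ (n - 1) * p.coeff 1 := by
  simpa [derivative_pow, coeff_derivative, coeff_zero_pow, eq_comm]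
    using coeff_derivative (p ^ n) 0

lemma X_add_one_pow_sub_one (m : ℕ) :
    (X + 1 : R[X]) ^ m - 1 = X * ∑ k ∈ range m, (X + 1) ^ k := by
  rw [mul_comm, ← geom_sum_mul, add_sub_cancel_right]

lemma coeff_geom_sum_X_add_one_zero (m : ℕ) :
    (∑ k ∈ range m, (X + 1 : R[X]) ^ k).coeff 0 = m := by
  simp [coeff_X_add_one_pow]

lemma coeff_geom_sum_X_add_one_one (m : ℕ) :
    (∑ k ∈ range m, (X + 1 : R[X]) ^ k).coeff 1 = ∑ k ∈ range m, (k : R) := by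
  simp [coeff_X_add_one_pow]

lemma coeff_X_add_one_pow_sub_one_pow_add (m n d : ℕ) :
    (((X + 1 : R[X]) ^ m - 1) ^ n).coeff (d + n) =
      ((∑ k ∈ range m, (X + 1 : R[X]) ^ k) ^ n).coeff d := by
  rw [X_add_one_pow_sub_one, mul_pow, coeff_X_pow_mul]

lemma coeff_X_add_one_pow_sub_one_pow_self (m n : ℕ) :
    (((X + 1 : R[X]) ^ m - 1) ^ n).coeff n = (m : R) ^ n := by
  simpa [coeff_zero_pow, coeff_geom_sum_X_add_one_zero]
    using coeff_X_add_one_pow_sub_one_pow_add (R := R) m n 0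

lemma two_mul_coeff_X_add_one_pow_sub_one_pow_succ (m n : ℕ) :
    2 * (((X + 1 : R[X]) ^ m - 1) ^ n).coeff (n + 1) = n * (m - 1) * (m : R) ^ n := by
  rw [add_comm n 1, coeff_X_add_one_pow_sub_one_pow_add, coeff_one_pow,
    coeff_geom_sum_X_add_one_zero, coeff_geom_sum_X_add_one_one]
  rcases n with _ | n
  · simp
  · push_cast
    linear_combination (n + 1 : R) * (m : R) ^ n * two_mul_sum_range_natCast (R := R) m

end Polynomial

theorem stmt_5_general (m : ℕ) (s : ℕ → ℕ → ℤ)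
    (hs : ∀ j k : ℕ, ((k * m + 1).choose j : ℤ) =
      ∑ i ∈ Finset.range (j + 1), s j i * (k.choose i : ℤ))
    (i : ℕ) :
    2 * s (i + 1) i = (i : ℤ) * ((m : ℤ) - 1) * (m : ℤ) ^ i + 2 * (m : ℤ) ^ i := by
  have h_newton : s (i + 1) i = (Δ_[1])^[i] (fun k ↦ ((k * m + 1).choose (i + 1) : ℤ)) 0 :=
    (fwdDiff_iter_apply_zero_of_eq_sum_mul_choose (hs (i + 1)) (by omega)).symm
  have h_pascal : (fun k : ℕ ↦ ((k * m + 1).choose (i + 1) : ℤ)) =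
      (fun k ↦ ((k * m).choose i : ℤ)) + fun k ↦ ((k * m).choose (i + 1) : ℤ) := by
    ext k; simp [Nat.choose_succ_succ]
  rw [h_newton, h_pascal, fwdDiff_iter_add, Pi.add_apply, fwdDiff_iter_choose_mul_apply_zero,
    fwdDiff_iter_choose_mul_apply_zero, mul_add, two_mul_coeff_X_add_one_pow_sub_one_pow_succ,
    coeff_X_add_one_pow_sub_one_pow_self]
  ring

theorem stmt_5 (m : ℕ) (hm : 2 ≤ m) (s : ℕ → ℕ → ℤ)
    (hs : ∀ j k : ℕ, ((k * m + 1).choose j : ℤ) =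
      ∑ i ∈ Finset.range (j + 1), s j i * (k.choose i : ℤ))
    (i : ℕ) (hi : 1 ≤ i) :
    2 * s (i + 1) i = (i : ℤ) * ((m : ℤ) - 1) * (m : ℤ) ^ i + 2 * (m : ℤ) ^ i :=
  stmt_5_general m s hs i
end

section
/- Let m ≥ 2 and s_{j,i} be defined by binomial(km+1,j) = Σ_i s_{j,i}·binomial(k,i). If m is odd, then for every i ≥ 1, m^i divides s_{i+1,i}. -/
/-!
Inverting the binomial expansion gives `s (i + 1) i = Δ^i [t ↦ C(t m + 1, i + 1)] (0)`, and Pascal's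
rule splits this as `Δ^i C(t m, i) + Δ^i C(t m, i + 1)` at `0`. Vandermonde's identity
`Δ C(t m, n) = ∑_{k < n} C(m, n - k) C(t m, k)` shows that `Δ^i C(t m, n)` vanishes for `n < i`,
equals `m ^ i` for `n = i`, and takes the value `i m ^ i (m - 1) / 2` at `0` for `n = i + 1`.
Hence `s (i + 1) i = m ^ i (1 + i (m - 1) / 2)`, and `(m - 1) / 2` is an integer when `m` is odd.
-/

open Finset fwdDiff

theorem coeff_eq_fwdDiff_iter_choose {g a : ℕ → ℤ} {N : ℕ}
    (hg : ∀ k, g k = ∑ r ∈ range N, a r * (k.choose r : ℤ)) {i : ℕ} (hi : i < N) :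
    a i = (Δ_[1])^[i] g 0 := by
  have hg' : g = ∑ r ∈ range N, a r • (fun k : ℕ ↦ (k.choose r : ℤ)) := by
    ext k
    simp [hg]
  rw [hg', fwdDiff_iter_finsetSum, Finset.sum_apply]
  simp only [fwdDiff_iter_const_smul, Pi.smul_apply, fwdDiff_iter_choose_zero, smul_eq_mul,
    mul_ite, mul_one, mul_zero, sum_ite_eq, mem_range, hi, if_true]

theorem two_mul_cast_choose_two (m : ℕ) : 2 * (m.choose 2 : ℤ) = m * (m - 1) := by
  have h : ((2 * m.choose 2 : ℤ) : ℚ) = ((m * (m - 1) : ℤ) : ℚ) := by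
    push_cast
    rw [Nat.cast_choose_two]
    ring
  exact_mod_cast h

def chooseMul (m n : ℕ) : ℕ → ℤ := fun t ↦ ((t * m).choose n : ℤ)

section chooseMul

variable (m : ℕ)

theorem fwdDiff_chooseMul (n : ℕ) :
    Δ_[1] (chooseMul m n) = ∑ k ∈ range n, (m.choose (n - k) : ℤ) • chooseMul m k := by
  ext t
  have hvandermonde : ((t * m + m).choose n : ℤ)
      = ∑ k ∈ range (n + 1), (m.choose (n - k) : ℤ) * ((t * m).choose k : ℤ) := by
    rw [Nat.add_choose_eq, Nat.sum_antidiagonal_eq_sum_range_succ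
      (fun a b ↦ (t * m).choose a * m.choose b)]
    push_cast
    exact sum_congr rfl fun k _ ↦ mul_comm _ _
  simp [fwdDiff, chooseMul, add_mul, hvandermonde, sum_range_succ]

theorem fwdDiff_iter_succ_chooseMul (i n : ℕ) :
    (Δ_[1])^[i + 1] (chooseMul m n)
      = ∑ k ∈ range n, (m.choose (n - k) : ℤ) • (Δ_[1])^[i] (chooseMul m k) := by
  rw [Function.iterate_succ_apply, fwdDiff_chooseMul, fwdDiff_iter_finsetSum]
  simp only [fwdDiff_iter_const_smul]

theorem fwdDiff_iter_chooseMul_of_lt {i n : ℕ} (h : n < i) : (Δ_[1])^[i] (chooseMul m n) = 0 := by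
  induction i generalizing n with
  | zero => omega
  | succ i ih =>
    rw [fwdDiff_iter_succ_chooseMul]
    exact sum_eq_zero fun k hk ↦ by rw [ih (by simp at hk; omega), smul_zero]

theorem fwdDiff_iter_chooseMul_self (i : ℕ) :
    (Δ_[1])^[i] (chooseMul m i) = fun _ ↦ (m : ℤ) ^ i := by
  induction i with
  | zero => ext t; simp [chooseMul]
  | succ i ih =>
    rw [fwdDiff_iter_succ_chooseMul, sum_range_succ, ih,
      sum_eq_zero fun k hk ↦ by rw [fwdDiff_iter_chooseMul_of_lt m (by simpa using hk), smul_zero]]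
    ext t
    simp [pow_succ, mul_comm]

theorem two_mul_fwdDiff_iter_chooseMul_succ_zero (i : ℕ) :
    2 * (Δ_[1])^[i] (chooseMul m (i + 1)) 0 = i * (m : ℤ) ^ i * (m - 1) := by
  induction i with
  | zero => simp [chooseMul]
  | succ i ih =>
    rw [fwdDiff_iter_succ_chooseMul, sum_range_succ, sum_range_succ,
      sum_eq_zero fun k hk ↦ by rw [fwdDiff_iter_chooseMul_of_lt m (by simpa using hk), smul_zero],
      fwdDiff_iter_chooseMul_self]
    have hc2 := two_mul_cast_choose_two m
    simp only [zero_add, Pi.add_apply, Pi.smul_apply, smul_eq_mul,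
      show i + 1 + 1 - i = 2 by omega, show i + 1 + 1 - (i + 1) = 1 by omega, Nat.choose_one_right]
    push_cast
    linear_combination (m : ℤ) ^ i * hc2 + (m : ℤ) * ih

end chooseMul

theorem stmt_6_general (m : ℕ) (hodd : Odd m) (s : ℕ → ℕ → ℤ)
    (hs : ∀ j k : ℕ, ((k * m + 1).choose j : ℤ) =
      ∑ i ∈ Finset.range (j + 1), s j i * (k.choose i : ℤ))
    (i : ℕ) : (m : ℤ) ^ i ∣ s (i + 1) i := by
  have hpascal : (fun t : ℕ ↦ ((t * m + 1).choose (i + 1) : ℤ))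
      = chooseMul m i + chooseMul m (i + 1) := by
    ext t
    simp [chooseMul, Nat.choose_succ_succ']
  have hsplit : s (i + 1) i = (m : ℤ) ^ i + (Δ_[1])^[i] (chooseMul m (i + 1)) 0 := by
    rw [coeff_eq_fwdDiff_iter_choose (hs (i + 1)) (by omega), hpascal, fwdDiff_iter_add,
      fwdDiff_iter_chooseMul_self]
    rfl
  obtain ⟨c, hc⟩ := hodd
  have hsuper : (Δ_[1])^[i] (chooseMul m (i + 1)) 0 = i * c * (m : ℤ) ^ i := by
    have h := two_mul_fwdDiff_iter_chooseMul_succ_zero m i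
    rw [hc] at h ⊢
    push_cast at h ⊢
    linarith
  exact ⟨1 + i * c, by rw [hsplit, hsuper]; ring⟩

theorem stmt_6 (m : ℕ) (hm : 2 ≤ m) (hodd : Odd m) (s : ℕ → ℕ → ℤ)
    (hs : ∀ j k : ℕ, ((k * m + 1).choose j : ℤ) =
      ∑ i ∈ Finset.range (j + 1), s j i * (k.choose i : ℤ))
    (i : ℕ) (hi : 1 ≤ i) : (m : ℤ) ^ i ∣ s (i + 1) i :=
  stmt_6_general m hodd s hs i
end

section
/- Let m ≥ 2 be even and s_{j,i} be defined by binomial(km+1,j) = Σ_i s_{j,i}·binomial(k,i). Then for every i ≥ 1, m^i/2 divides s_{i+1,i}. -/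
/-!
By Newton's formula `s j i` is the `i`-th forward difference at `0` of `k ↦ C(k m + 1, j)`.
Vandermonde's identity `C((k + 1) m + 1, c) = ∑ₐ C(m, a) C(k m + 1, c - a)` expresses the forward
difference of this family in terms of its members of lower index, which yields
`s (i + 1) i = m ^ i + i C(m, 2) m ^ (i - 1)`. For `m = 2 t` this is `t m ^ (i - 1) (2 + i (m - 1))`,
a multiple of `m ^ i / 2 = t m ^ (i - 1)`.
-/

open Finset Function

def chooseAffine (m c : ℕ) (k : ℕ) : ℤ := ((k * m + 1).choose c : ℕ)

lemma fwdDiff_chooseAffine (m c : ℕ) :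
    fwdDiff 1 (chooseAffine m c) =
      ∑ a ∈ range c, (m.choose (a + 1) : ℤ) • chooseAffine m (c - (a + 1)) := by
  ext k
  have hvand := Nat.add_choose_eq m (k * m + 1) c
  rw [Nat.sum_antidiagonal_eq_sum_range_succ_mk, sum_range_succ'] at hvand
  simp only [fwdDiff, chooseAffine, Finset.sum_apply, Pi.smul_apply, smul_eq_mul]
  rw [show (k + 1) * m + 1 = m + (k * m + 1) by ring, hvand]
  push_cast
  simp

lemma fwdDiff_iter_succ_chooseAffine_zero (m c n : ℕ) :
    (fwdDiff 1)^[n + 1] (chooseAffine m c) 0 =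
      ∑ a ∈ range c, (m.choose (a + 1) : ℤ) * (fwdDiff 1)^[n] (chooseAffine m (c - (a + 1))) 0 := by
  simp only [iterate_succ_apply, fwdDiff_chooseAffine, fwdDiff_iter_finsetSum,
    fwdDiff_iter_const_smul, Finset.sum_apply, Pi.smul_apply, smul_eq_mul]

lemma fwdDiff_iter_chooseAffine_zero_of_lt {m c n : ℕ} (h : c < n) :
    (fwdDiff 1)^[n] (chooseAffine m c) 0 = 0 := by
  induction n generalizing c with
  | zero => omega
  | succ n ih =>
    rw [fwdDiff_iter_succ_chooseAffine_zero]
    exact sum_eq_zero fun a ha ↦ by rw [ih (by simp at ha; omega), mul_zero]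

lemma fwdDiff_iter_chooseAffine_self_zero (m n : ℕ) :
    (fwdDiff 1)^[n] (chooseAffine m n) 0 = (m : ℤ) ^ n := by
  induction n with
  | zero => simp [chooseAffine]
  | succ n ih =>
    rw [fwdDiff_iter_succ_chooseAffine_zero, sum_range_succ', sum_eq_zero fun a ha ↦ by
      rw [fwdDiff_iter_chooseAffine_zero_of_lt (by simp at ha; omega), mul_zero]]
    simp [ih, pow_succ']

lemma fwdDiff_iter_chooseAffine_succ_zero (m n : ℕ) :
    (fwdDiff 1)^[n] (chooseAffine m (n + 1)) 0 =
      (m : ℤ) ^ n + n * m.choose 2 * (m : ℤ) ^ (n - 1) := by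
  induction n with
  | zero => simp [chooseAffine]
  | succ n ih =>
    rw [fwdDiff_iter_succ_chooseAffine_zero, sum_range_succ', sum_range_succ',
      sum_eq_zero fun a ha ↦ by
        rw [fwdDiff_iter_chooseAffine_zero_of_lt (by simp at ha; omega), mul_zero]]
    simp only [zero_add, Nat.add_sub_add_right, Nat.add_sub_cancel, ih,
      fwdDiff_iter_chooseAffine_self_zero, Nat.choose_one_right]
    rcases n with _ | n
    · simp [add_comm]
    · push_cast
      ring

lemma fwdDiff_iter_zero_of_eq_sum_choose {f c : ℕ → ℤ} {N n : ℕ} (hn : n < N)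
    (hf : ∀ k, f k = ∑ i ∈ range N, c i * k.choose i) :
    (fwdDiff 1)^[n] f 0 = c n := by
  have hf' : f = ∑ i ∈ range N, c i • fun k : ℕ ↦ (k.choose i : ℤ) := by
    ext k; simp [hf, Finset.sum_apply]
  simp only [hf', fwdDiff_iter_finsetSum, fwdDiff_iter_const_smul, Finset.sum_apply,
    Pi.smul_apply, fwdDiff_iter_choose_zero, smul_eq_mul, mul_ite, mul_one, mul_zero]
  simp [hn]

lemma pow_div_two_dvd_of_even {m : ℕ} (hm : Even m) (n : ℕ) :
    (m : ℤ) ^ (n + 1) / 2 ∣ (m : ℤ) ^ (n + 1) + (n + 1) * m.choose 2 * (m : ℤ) ^ n := by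
  obtain ⟨t, rfl⟩ := hm
  have hchoose : ((t + t).choose 2 : ℤ) = t * (2 * t - 1) := by
    qify
    rw [Nat.cast_choose_two]
    push_cast
    ring
  have hdiv : ((t + t : ℕ) : ℤ) ^ (n + 1) / 2 = t * ((t + t : ℕ) : ℤ) ^ n := by
    rw [show ((t + t : ℕ) : ℤ) ^ (n + 1) = 2 * (t * ((t + t : ℕ) : ℤ) ^ n) by push_cast; ring]
    exact Int.mul_ediv_cancel_left _ two_ne_zero
  rw [hdiv, hchoose]
  exact ⟨2 + (n + 1) * (2 * t - 1), by push_cast; ring⟩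

theorem stmt_7_general (m : ℕ) (heven : Even m) (s : ℕ → ℕ → ℤ)
    (hs : ∀ j k : ℕ, ((k * m + 1).choose j : ℤ) =
      ∑ i ∈ Finset.range (j + 1), s j i * (k.choose i : ℤ))
    (i : ℕ) (hi : 1 ≤ i) : ((m : ℤ) ^ i / 2) ∣ s (i + 1) i := by
  obtain ⟨n, rfl⟩ := Nat.exists_eq_add_of_le' hi
  have hcoeff : s (n + 1 + 1) (n + 1) = (fwdDiff 1)^[n + 1] (chooseAffine m (n + 1 + 1)) 0 :=
    (fwdDiff_iter_zero_of_eq_sum_choose (by omega) (hs (n + 1 + 1))).symm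
  rw [hcoeff, fwdDiff_iter_chooseAffine_succ_zero]
  push_cast
  exact pow_div_two_dvd_of_even heven n

theorem stmt_7 (m : ℕ) (hm : 2 ≤ m) (heven : Even m) (s : ℕ → ℕ → ℤ)
    (hs : ∀ j k : ℕ, ((k * m + 1).choose j : ℤ) =
      ∑ i ∈ Finset.range (j + 1), s j i * (k.choose i : ℤ))
    (i : ℕ) (hi : 1 ≤ i) : ((m : ℤ) ^ i / 2) ∣ s (i + 1) i :=
  stmt_7_general m heven s hs i hi
end

section
/- The generating function for restricted m-ary partitions satisfies Σ_{n≥0} c_m(n) q^n = 1 + Σ_{n≥0} q^{1+m+⋯+m^n} / ((1-q)(1-q^m)⋯(1-q^{m^n})), as formal power series in q. -/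
/-!
A nonempty restricted `m`-ary partition has `{1, m, …, mⁿ}` as its set of distinct parts for
some `n`. Removing one copy of each distinct part `S` of a partition of `N` leaves a partition of
`N - ∑ S` with all parts in `S`, and conversely; hence the partitions whose set of distinct parts
is `S` have generating function `X ^ (∑ S) * ∏_{s ∈ S} (1 - X ^ s)⁻¹`. Summing over `n` (the
empty partition giving the `1`) yields the identity.
-/

open Finset PowerSeries
open scoped PowerSeries.WithPiTopology

theorem Multiset.sum_sub_dedup_add_sum_toFinset (s : Multiset ℕ) :
    (s - s.dedup).sum + ∑ x ∈ s.toFinset, x = s.sum := by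
  rw [sum_eq_multiset_sum, Multiset.map_id', Multiset.toFinset_val, ← Multiset.sum_add,
    tsub_add_cancel_of_le (Multiset.dedup_le s)]

theorem PowerSeries.tsum_X_pow_mul_eq_inv {K : Type*} [Field K] [TopologicalSpace K]
    [IsTopologicalRing K] [T2Space K] {a : ℕ} (ha : a ≠ 0) :
    ∑' j, (X : K⟦X⟧) ^ (a * j) = (1 - X ^ a)⁻¹ := by
  rw [PowerSeries.eq_inv_iff_mul_eq_one (by simp [ha])]
  simp_rw [pow_mul]
  exact WithPiTopology.tsum_pow_mul_one_sub_of_constantCoeff_eq_zero (by simp [ha])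

namespace Nat.Partition

theorem card_parts_le {N : ℕ} (P : N.Partition) : P.parts.card ≤ N := by
  simpa [P.parts_sum] using Multiset.card_nsmul_le_sum fun x hx => P.parts_pos hx

theorem powerSeriesMk_card_restricted_mem {K : Type*} [Field K] {S : Finset ℕ} (hS : 0 ∉ S) :
    PowerSeries.mk (fun n ↦ (#(restricted n (· ∈ S)) : K)) = ∏ s ∈ S, (1 - X ^ s)⁻¹ := by
  -- Mathlib's product formula needs a topology on `K`; the discrete one will do.
  let _ : TopologicalSpace K := ⊥
  have : DiscreteTopology K := ⟨rfl⟩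
  rw [← (hasProd_powerSeriesMk_card_restricted K (· ∈ S)).tprod_eq,
    tprod_eq_prod (s := S.image (· - 1))]
  · rw [prod_image fun s hs t ht h => by grind]
    refine prod_congr rfl fun s hs => ?_
    have hs' : s - 1 + 1 = s := by grind
    simp only [hs', if_pos hs]
    exact tsum_X_pow_mul_eq_inv (by grind)
  · exact fun i hi => if_neg fun h => hi (mem_image.2 ⟨i + 1, h, rfl⟩)

theorem card_parts_toFinset_eq (N : ℕ) {S : Finset ℕ} (hS : 0 ∉ S) :
    #{P : N.Partition | P.parts.toFinset = S} =
      if ∑ s ∈ S, s ≤ N then #(restricted (N - ∑ s ∈ S, s) (· ∈ S)) else 0 := by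
  have sum_sub_add : ∀ P : N.Partition, P.parts.toFinset = S →
      (P.parts - S.val).sum + ∑ s ∈ S, s = N := fun P hP => by
    subst hP
    rw [Multiset.toFinset_val, Multiset.sum_sub_dedup_add_sum_toFinset, P.parts_sum]
  split_ifs with hle
  · refine card_bij' (fun P hP => ⟨P.parts - S.val,
        fun hx => P.parts_pos (Multiset.mem_of_le (Multiset.sub_le_self _ _) hx),
        by have := sum_sub_add P (mem_filter.1 hP).2; omega⟩)
      (fun Q hQ => ⟨Q.parts + S.val, fun {i} hi => ?_, ?_⟩) ?_ ?_ ?_ ?_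
    · have : i ∈ S := by
        rcases Multiset.mem_add.1 hi with hi | hi
        exacts [(mem_filter.1 hQ).2 i hi, hi]
      exact Nat.pos_of_ne_zero (ne_of_mem_of_not_mem this hS)
    · have hsum : S.val.sum = ∑ s ∈ S, s := S.sum_val
      rw [Multiset.sum_add, Q.parts_sum, hsum]
      omega
    · intro P hP
      simp only [restricted, mem_filter, mem_univ, true_and]
      intro x hx
      rw [← (mem_filter.1 hP).2, Multiset.mem_toFinset]
      exact Multiset.mem_of_le (Multiset.sub_le_self _ _) hx
    · intro Q hQ
      simp only [mem_filter, mem_univ, true_and, Multiset.toFinset_add, val_toFinset]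
      exact union_eq_right.2 fun x hx => (mem_filter.1 hQ).2 x (Multiset.mem_toFinset.1 hx)
    · intro P hP
      ext1
      exact tsub_add_cancel_of_le ((mem_filter.1 hP).2 ▸ Multiset.dedup_le _)
    · intro Q hQ
      ext1
      exact add_tsub_cancel_right _ _
  · rw [Finset.card_eq_zero, filter_eq_empty_iff]
    intro P _ hP
    have := sum_sub_add P hP
    omega

theorem powerSeriesMk_card_parts_toFinset_eq {K : Type*} [Field K] {S : Finset ℕ} (hS : 0 ∉ S) :
    PowerSeries.mk (fun N ↦ (#{P : N.Partition | P.parts.toFinset = S} : K)) =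
      X ^ (∑ s ∈ S, s) * ∏ s ∈ S, (1 - X ^ s)⁻¹ := by
  ext N
  rw [coeff_mk, card_parts_toFinset_eq N hS, coeff_X_pow_mul',
    ← powerSeriesMk_card_restricted_mem hS, coeff_mk]
  split_ifs <;> simp

end Nat.Partition

section RestrictedMary

variable {m : ℕ}

theorem restrictedMary_iff_toFinset_eq_image_pow (hm : 2 ≤ m) (s : Multiset ℕ) :
    ((∀ x ∈ s, ∃ i, x = m ^ i) ∧ ∀ i, m ^ i ∈ s → ∀ j < i, m ^ j ∈ s) ↔
      s.toFinset = (range #s.toFinset).image (m ^ ·) := by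
  have hinj := Nat.pow_right_injective hm
  constructor
  · rintro ⟨hpow, hdown⟩
    refine eq_of_subset_of_card_le (fun x hx => ?_)
      (by rw [card_image_of_injective _ hinj, card_range])
    obtain ⟨i, rfl⟩ := hpow x (Multiset.mem_toFinset.1 hx)
    have hsub : (range (i + 1)).image (m ^ ·) ⊆ s.toFinset := by
      intro y hy
      obtain ⟨j, hj, rfl⟩ := mem_image.1 hy
      rcases Nat.lt_succ_iff_lt_or_eq.1 (mem_range.1 hj) with hj | rfl
      exacts [Multiset.mem_toFinset.2 (hdown i (Multiset.mem_toFinset.1 hx) j hj), hx]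
    have := card_le_card hsub
    rw [card_image_of_injective _ hinj, card_range] at this
    exact mem_image_of_mem _ (mem_range.2 this)
  · generalize #s.toFinset = k
    intro h
    have hmem : ∀ x, x ∈ s ↔ ∃ i < k, m ^ i = x := by
      intro x
      rw [← Multiset.mem_toFinset, h]
      simp
    refine ⟨fun x hx => ?_, fun i hi j hj => ?_⟩
    · obtain ⟨i, -, rfl⟩ := (hmem x).1 hx
      exact ⟨i, rfl⟩
    · obtain ⟨k, hk, hki⟩ := (hmem _).1 hi
      exact (hmem _).2 ⟨j, by rw [hinj hki] at hk; omega, rfl⟩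

theorem restrictedMaryCount_eq_sum (hm : 2 ≤ m) (N : ℕ) :
    restrictedMaryCount m N =
      ∑ k ∈ range (N + 2), #{P : N.Partition | P.parts.toFinset = (range k).image (m ^ ·)} := by
  classical
  rw [restrictedMaryCount, Nat.card_eq_fintype_card, Fintype.card_subtype,
    card_eq_sum_card_fiberwise (f := fun P => #P.parts.toFinset) (t := range (N + 2))]
  · refine sum_congr rfl fun k _ => congrArg card (Finset.ext fun P => ?_)
    simp only [mem_filter, mem_univ, true_and, restrictedMary_iff_toFinset_eq_image_pow hm]
    constructor
    · rintro ⟨h, rfl⟩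
      exact h
    · intro h
      rw [h, card_image_of_injective _ (Nat.pow_right_injective hm), card_range]
      exact ⟨rfl, rfl⟩
  · intro P _
    have := (Multiset.toFinset_card_le P.parts).trans P.card_parts_le
    simp only [coe_range, Set.mem_Iio]
    omega

theorem powerSeriesMk_card_parts_toFinset_eq_image_pow {K : Type*} [Field K] (hm : 2 ≤ m)
    (k : ℕ) :
    PowerSeries.mk (fun N ↦
        (#{P : N.Partition | P.parts.toFinset = (range k).image (m ^ ·)} : K)) =
      X ^ (∑ i ∈ range k, m ^ i) * ∏ i ∈ range k, (1 - X ^ (m ^ i))⁻¹ := by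
  have hinj := (Nat.pow_right_injective hm).injOn (s := range k)
  rw [Nat.Partition.powerSeriesMk_card_parts_toFinset_eq (by simp; omega),
    sum_image hinj, prod_image hinj]

end RestrictedMary

open PowerSeries in
/-- Coefficient-wise form of the identity: the summand indexed by `n` has order `> N` once
`n > N`, so the sum over `n ∈ range (N+1)` captures the coefficient of `q^N` of the full
series. -/
theorem stmt_10 (m : ℕ) (hm : 2 ≤ m) (N : ℕ) :
    (coeff (R := ℚ) N) (PowerSeries.mk fun n => (restrictedMaryCount m n : ℚ)) =
      (coeff (R := ℚ) N) (1 : PowerSeries ℚ) +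
        ∑ n ∈ Finset.range (N + 1),
          (coeff (R := ℚ) N) ((X : PowerSeries ℚ) ^ (∑ i ∈ Finset.range (n + 1), m ^ i) *
            ∏ i ∈ Finset.range (n + 1), (1 - (X : PowerSeries ℚ) ^ (m ^ i))⁻¹) := by
  have hterm (k : ℕ) :
      (#{P : N.Partition | P.parts.toFinset = (range k).image (m ^ ·)} : ℚ) =
        coeff N (X ^ (∑ i ∈ range k, m ^ i) * ∏ i ∈ range k, (1 - X ^ (m ^ i))⁻¹) := by
    rw [← powerSeriesMk_card_parts_toFinset_eq_image_pow hm, coeff_mk]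
  rw [coeff_mk, restrictedMaryCount_eq_sum hm, Nat.cast_sum, sum_range_succ', add_comm]
  simp_rw [hterm]
  simp only [range_zero, sum_empty, prod_empty, pow_zero, mul_one]
end

section
/- For m = 2, c_2(8n + 4) ≡ 0 (mod 2) for all n ≥ 0, where c_2(n) counts restricted binary partitions of n. -/
namespace Multiset

def IsRestrictedPowers (m : ℕ) (s : Multiset ℕ) : Prop :=
  (∀ x ∈ s, ∃ i, x = m ^ i) ∧ ∀ i, m ^ i ∈ s → ∀ j < i, m ^ j ∈ s

variable {m : ℕ} {s : Multiset ℕ}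

theorem pow_succ_mem_one_cons_map_mul_iff (hm : 2 ≤ m) (j : ℕ) :
    m ^ (j + 1) ∈ 1 ::ₘ s.map (m * ·) ↔ m ^ j ∈ s := by
  have hne : m ^ (j + 1) ≠ 1 := (Nat.one_lt_pow j.succ_ne_zero hm).ne'
  rw [mem_cons, or_iff_right hne, mem_map]
  simp [pow_succ', mul_right_inj' (show m ≠ 0 by omega)]

theorem isRestrictedPowers_one_cons_map_mul_iff (hm : 2 ≤ m) :
    (1 ::ₘ s.map (m * ·)).IsRestrictedPowers m ↔ s.IsRestrictedPowers m := by
  constructor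
  · rintro ⟨hpow, hclosed⟩
    refine ⟨fun y hy => ?_, fun i hi j hj => ?_⟩
    · obtain ⟨i, hi⟩ := hpow (m * y) (mem_cons_of_mem (mem_map_of_mem _ hy))
      cases i with
      | zero =>
        have := Nat.eq_one_of_mul_eq_one_right (hi.trans (pow_zero m))
        omega
      | succ i =>
        rw [pow_succ'] at hi
        exact ⟨i, Nat.eq_of_mul_eq_mul_left (by omega) hi⟩
    · rw [← pow_succ_mem_one_cons_map_mul_iff hm] at hi ⊢
      exact hclosed _ hi _ (by omega)
  · rintro ⟨hpow, hclosed⟩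
    refine ⟨fun x hx => ?_, fun i hi j hj => ?_⟩
    · rcases mem_cons.1 hx with rfl | hx
      · exact ⟨0, (pow_zero m).symm⟩
      · obtain ⟨y, hy, rfl⟩ := mem_map.1 hx
        obtain ⟨i, rfl⟩ := hpow y hy
        exact ⟨i + 1, (pow_succ' m i).symm⟩
    · cases j with
      | zero => simp
      | succ j =>
        obtain ⟨i, rfl⟩ : ∃ i', i = i' + 1 := ⟨i - 1, by omega⟩
        rw [pow_succ_mem_one_cons_map_mul_iff hm] at hi ⊢
        exact hclosed i hi j (by omega)

namespace IsRestrictedPowers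

theorem one_mem (h : s.IsRestrictedPowers m) (hs : s ≠ 0) : 1 ∈ s := by
  obtain ⟨x, hx⟩ := exists_mem_of_ne_zero hs
  obtain ⟨i, rfl⟩ := h.1 x hx
  rcases Nat.eq_zero_or_pos i with rfl | hi
  · simpa using hx
  · simpa using h.2 i hx 0 hi

theorem sum_modEq_count_one (h : s.IsRestrictedPowers m) : s.sum ≡ s.count 1 [MOD m] := by
  have hdvd : m ∣ (s.filter (¬ 1 = ·)).sum := by
    refine dvd_sum fun x hx => ?_
    obtain ⟨hxs, hx1⟩ := mem_filter.1 hx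
    obtain ⟨i, rfl⟩ := h.1 x hxs
    exact dvd_pow_self m fun hi => hx1 (by rw [hi, pow_zero])
  calc s.sum = (s.filter (1 = ·)).sum + (s.filter (¬ 1 = ·)).sum := by
        rw [← sum_add, filter_add_not]
    _ = s.count 1 + (s.filter (¬ 1 = ·)).sum := by
        rw [filter_eq, sum_replicate, smul_eq_mul, mul_one]
    _ ≡ s.count 1 + 0 [MOD m] := Nat.ModEq.add_left _ (Nat.modEq_zero_iff_dvd.2 hdvd)

theorem cons_one (h : s.IsRestrictedPowers m) : (1 ::ₘ s).IsRestrictedPowers m := by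
  refine ⟨fun x hx => ?_, fun i hi j hj => ?_⟩
  · rcases mem_cons.1 hx with rfl | hx
    · exact ⟨0, (pow_zero m).symm⟩
    · exact h.1 x hx
  · rcases mem_cons.1 hi with hi | hi
    · rcases Nat.pow_eq_one.1 hi with rfl | rfl
      · simp
      · omega
    · exact mem_cons_of_mem (h.2 i hi j hj)

theorem erase_one (h : s.IsRestrictedPowers m) (h1 : 1 ∈ s.erase 1) :
    (s.erase 1).IsRestrictedPowers m := by
  refine ⟨fun x hx => h.1 x (mem_of_mem_erase hx), fun i hi j hj => ?_⟩
  by_cases hj1 : m ^ j = 1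
  · rwa [hj1]
  · exact (mem_erase_of_ne hj1).2 (h.2 i (mem_of_mem_erase hi) j hj)

theorem eq_one_cons_map_mul_map_div (h : s.IsRestrictedPowers m) (h1 : s.count 1 = 1) :
    s = 1 ::ₘ ((s.erase 1).map (· / m)).map (m * ·) := by
  have hnot : 1 ∉ s.erase 1 := by
    rw [← count_eq_zero, count_erase_self, h1]
  have hdvd : ∀ x ∈ s.erase 1, m ∣ x := fun x hx => by
    obtain ⟨i, rfl⟩ := h.1 x (mem_of_mem_erase hx)
    exact dvd_pow_self m fun hi => hnot (by rwa [hi, pow_zero] at hx)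
  rw [map_map, map_congr rfl (f := (m * ·) ∘ (· / m)) (g := id)
    fun x hx => Nat.mul_div_cancel' (hdvd x hx), map_id, cons_erase (count_pos.1 (by omega))]

end IsRestrictedPowers

end Multiset

open Multiset

/-- Parts need not be required positive: for `0 < m` they are powers of `m` (see `equivPartition`). -/
abbrev RestrictedPartition (m n : ℕ) : Type :=
  {s : Multiset ℕ // s.sum = n ∧ s.IsRestrictedPowers m}

namespace RestrictedPartition

variable {m n : ℕ}

def equivPartition (hm : 0 < m) :
    {P : Nat.Partition n // P.parts.IsRestrictedPowers m} ≃ RestrictedPartition m n where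
  toFun P := ⟨P.1.parts, P.1.parts_sum, P.2⟩
  invFun s := ⟨⟨s.1, fun hx => by
    obtain ⟨i, rfl⟩ := s.2.2.1 _ hx
    exact pow_pos hm i, s.2.1⟩, s.2.2⟩
  left_inv _ := rfl
  right_inv _ := rfl

theorem finite (hm : 0 < m) : Finite (RestrictedPartition m n) :=
  Finite.of_equiv _ (equivPartition hm)

theorem one_mem (s : RestrictedPartition m n) (hn : n ≠ 0) : 1 ∈ s.1 :=
  s.2.2.one_mem fun h => hn (by rw [← s.2.1, h, sum_zero])

def consOneEquiv (hn : n ≠ 0) :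
    RestrictedPartition m n ≃ {t : RestrictedPartition m (n + 1) // t.1.count 1 ≠ 1} where
  toFun s := ⟨⟨1 ::ₘ s.1, by rw [sum_cons, s.2.1, add_comm], s.2.2.cons_one⟩, by
    have := count_pos.2 (s.one_mem hn)
    rw [count_cons_self]
    omega⟩
  invFun t := ⟨t.1.1.erase 1, by
      have hsum := congrArg sum (cons_erase (t.1.one_mem n.succ_ne_zero))
      rw [sum_cons, t.1.2.1] at hsum
      omega,
    t.1.2.2.erase_one (count_pos.1 (by
      have hpos := count_pos.2 (t.1.one_mem n.succ_ne_zero)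
      have hne := t.2
      rw [count_erase_self]
      omega))⟩
  left_inv s := Subtype.ext (erase_cons_head 1 s.1)
  right_inv t := Subtype.ext (Subtype.ext (cons_erase (t.1.one_mem n.succ_ne_zero)))

def mulConsOneEquiv (hm : 2 ≤ m) :
    RestrictedPartition m n ≃ {t : RestrictedPartition m (m * n + 1) // t.1.count 1 = 1} where
  toFun s := ⟨⟨1 ::ₘ s.1.map (m * ·),
    by rw [sum_cons, sum_map_mul_left, map_id', s.2.1, add_comm],
    (isRestrictedPowers_one_cons_map_mul_iff hm).2 s.2.2⟩, by
      rw [count_cons_self, count_eq_zero.2]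
      simp only [mem_map, not_exists, not_and]
      intro x _ hx
      have := Nat.eq_one_of_mul_eq_one_right hx
      omega⟩
  invFun t := ⟨(t.1.1.erase 1).map (· / m), by
      have := congrArg sum (t.1.2.2.eq_one_cons_map_mul_map_div t.2)
      rw [sum_cons, sum_map_mul_left, map_id', t.1.2.1] at this
      apply Nat.eq_of_mul_eq_mul_left (show 0 < m by omega)
      omega,
    (isRestrictedPowers_one_cons_map_mul_iff hm).1
      (t.1.2.2.eq_one_cons_map_mul_map_div t.2 ▸ t.1.2.2)⟩
  left_inv s := by
    apply Subtype.ext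
    change ((1 ::ₘ s.1.map (m * ·)).erase 1).map (· / m) = s.1
    rw [erase_cons_head, map_map, map_congr rfl (f := (· / m) ∘ (m * ·)) (g := id)
      fun x _ => Nat.mul_div_cancel_left x (by omega), map_id]
  right_inv t := Subtype.ext (Subtype.ext (t.1.2.2.eq_one_cons_map_mul_map_div t.2).symm)

theorem card_add_one (hm : 0 < m) (hn : n ≠ 0) :
    Nat.card (RestrictedPartition m (n + 1)) = Nat.card (RestrictedPartition m n) +
      Nat.card {t : RestrictedPartition m (n + 1) // t.1.count 1 = 1} := by
  have := finite (n := n + 1) hm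
  rw [← Nat.card_congr (Equiv.sumCompl fun t : RestrictedPartition m (n + 1) => t.1.count 1 = 1),
    Nat.card_sum, Nat.card_congr (consOneEquiv hn), add_comm]

theorem card_count_one_eq_one_of_not_dvd (h : ¬ m ∣ n) :
    Nat.card {t : RestrictedPartition m (n + 1) // t.1.count 1 = 1} = 0 :=
  @Nat.card_of_isEmpty _ ⟨fun ⟨⟨s, hsum, hs⟩, h1⟩ => h <| Nat.modEq_zero_iff_dvd.1 <|
    Nat.ModEq.add_right_cancel' 1 <| by
      rw [zero_add, ← hsum, ← h1]
      exact hs.sum_modEq_count_one⟩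

end RestrictedPartition

theorem restrictedMaryCount_eq_card {m : ℕ} (hm : 0 < m) (n : ℕ) :
    restrictedMaryCount m n = Nat.card (RestrictedPartition m n) :=
  Nat.card_congr (RestrictedPartition.equivPartition hm)

theorem restrictedMaryCount_add_one_of_not_dvd {m n : ℕ} (hm : 0 < m) (h : ¬ m ∣ n) :
    restrictedMaryCount m (n + 1) = restrictedMaryCount m n := by
  rw [restrictedMaryCount_eq_card hm, restrictedMaryCount_eq_card hm,
    RestrictedPartition.card_add_one hm (by rintro rfl; exact h (dvd_zero m)),
    RestrictedPartition.card_count_one_eq_one_of_not_dvd h, add_zero]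

theorem restrictedMaryCount_mul_add_one {m k : ℕ} (hm : 2 ≤ m) (hk : k ≠ 0) :
    restrictedMaryCount m (m * k + 1) =
      restrictedMaryCount m (m * k) + restrictedMaryCount m k := by
  simp only [restrictedMaryCount_eq_card (show 0 < m by omega)]
  rw [RestrictedPartition.card_add_one (by omega) (by positivity),
    ← Nat.card_congr (RestrictedPartition.mulConsOneEquiv hm)]

theorem restrictedMaryCount_two_four_mul_add_four {k : ℕ} (hk : k ≠ 0) :
    restrictedMaryCount 2 (4 * k + 4) = restrictedMaryCount 2 (4 * k) +
      2 * restrictedMaryCount 2 (2 * k) + restrictedMaryCount 2 k := by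
  have h₁ := restrictedMaryCount_add_one_of_not_dvd (n := 4 * k + 3) two_pos (by omega)
  have h₂ := restrictedMaryCount_mul_add_one (k := 2 * k + 1) le_rfl (by omega)
  have h₃ := restrictedMaryCount_add_one_of_not_dvd (n := 4 * k + 1) two_pos (by omega)
  have h₄ := restrictedMaryCount_mul_add_one (k := 2 * k) le_rfl (by omega)
  have h₅ := restrictedMaryCount_mul_add_one le_rfl hk
  ring_nf at h₁ h₂ h₃ h₄ h₅ ⊢
  omega

theorem stmt_11 (n : ℕ) : restrictedMaryCount 2 (8 * n + 4) ≡ 0 [MOD 2] := by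
  induction n with
  | zero =>
    have h₁ := restrictedMaryCount_add_one_of_not_dvd (n := 3) two_pos (by omega)
    have h₂ := restrictedMaryCount_mul_add_one (k := 1) le_rfl one_ne_zero
    have h₃ := restrictedMaryCount_add_one_of_not_dvd (n := 1) two_pos (by omega)
    norm_num [Nat.ModEq] at h₁ h₂ h₃ ⊢
    omega
  | succ n ih =>
    have h₁ := restrictedMaryCount_two_four_mul_add_four (k := 2 * n + 2) (by omega)
    have h₂ := restrictedMaryCount_two_four_mul_add_four (k := 2 * n + 1) (by omega)
    have h₃ := restrictedMaryCount_add_one_of_not_dvd (n := 2 * n + 1) two_pos (by omega)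
    simp only [Nat.ModEq] at ih ⊢
    ring_nf at h₁ h₂ h₃ ih ⊢
    omega
end

section
/- For m = 3, c_3(81n + 27 + 9) ≡ 0 (mod 9) for all n ≥ 0, where c_3(n) counts restricted ternary partitions of n. -/
namespace Stmt12Aux

open Multiset

/-- The subtype of restricted ternary partitions of `n`. -/
abbrev RT (n : ℕ) := {P : Nat.Partition n //
    (∀ x ∈ P.parts, ∃ i, x = (3:ℕ) ^ i) ∧
    ∀ i, (3:ℕ) ^ i ∈ P.parts → ∀ j < i, (3:ℕ) ^ j ∈ P.parts}

lemma rmc_eq (n : ℕ) : restrictedMaryCount 3 n = Nat.card (RT n) := rfl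

lemma pow3_eq_one {i : ℕ} (h : (3:ℕ) ^ i = 1) : i = 0 := by
  by_contra hi
  have : (3:ℕ) ^ 1 ≤ 3 ^ i := Nat.pow_le_pow_right (by norm_num) (by omega)
  simp [h] at this

lemma pow3_inj {a b : ℕ} (h : (3:ℕ) ^ a = (3:ℕ) ^ b) : a = b :=
  Nat.pow_right_injective (by norm_num) h

lemma one_mem_of_ne {n : ℕ} (P : RT n) (hn : n ≠ 0) : 1 ∈ P.1.parts := by
  have h0 : P.1.parts ≠ 0 := by
    intro h
    apply hn
    rw [← P.1.parts_sum, h]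
    rfl
  obtain ⟨x, hx⟩ := Multiset.exists_mem_of_ne_zero h0
  obtain ⟨i, rfl⟩ := P.2.1 x hx
  cases i with
  | zero => simpa using hx
  | succ k =>
    have := P.2.2 (k + 1) hx 0 (by omega)
    simpa using this

/-- The empty restricted partition of `0`. -/
def emptyRT : RT 0 :=
  ⟨⟨0, by simp, by simp⟩, by constructor <;> simp⟩

/-- Insert a part `1`. -/
def ins1 {n : ℕ} (P : RT n) : RT (n + 1) :=
  ⟨⟨1 ::ₘ P.1.parts,
    by
      intro i hi
      rcases Multiset.mem_cons.1 hi with h | h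
      · omega
      · exact P.1.parts_pos h,
    by rw [Multiset.sum_cons, P.1.parts_sum]; omega⟩,
   by
    constructor
    · intro x hx
      rcases Multiset.mem_cons.1 hx with rfl | h
      · exact ⟨0, rfl⟩
      · exact P.2.1 x h
    · intro i hi j hj
      rcases Multiset.mem_cons.1 hi with h1 | h
      · have := pow3_eq_one h1
        omega
      · exact Multiset.mem_cons_of_mem (P.2.2 i h j hj)⟩

/-- Multiply all parts by `3` and insert a part `1`. -/
def mul3 {m : ℕ} (Q : RT m) : RT (3 * m + 1) :=
  ⟨⟨1 ::ₘ Q.1.parts.map (fun x => 3 * x),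
    by
      intro i hi
      rcases Multiset.mem_cons.1 hi with h | h
      · omega
      · obtain ⟨y, hy, rfl⟩ := Multiset.mem_map.1 h
        have := Q.1.parts_pos hy
        omega,
    by
      rw [Multiset.sum_cons, Multiset.sum_map_mul_left]
      simp only [Multiset.map_id']
      rw [Q.1.parts_sum]
      omega⟩,
   by
    constructor
    · intro x hx
      rcases Multiset.mem_cons.1 hx with rfl | h
      · exact ⟨0, rfl⟩
      · obtain ⟨y, hy, rfl⟩ := Multiset.mem_map.1 h
        obtain ⟨i, rfl⟩ := Q.2.1 y hy
        exact ⟨i + 1, by rw [pow_succ]; ring⟩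
    · intro i hi j hj
      rcases Multiset.mem_cons.1 hi with h1 | h
      · have := pow3_eq_one h1
        omega
      · obtain ⟨y, hy, hxy⟩ := Multiset.mem_map.1 h
        obtain ⟨k, rfl⟩ := Q.2.1 y hy
        have hik : i = k + 1 := by
          refine (pow3_inj (a := i) (b := k + 1) ?_)
          rw [← hxy, pow_succ]; ring
        subst hik
        cases j with
        | zero =>
          simp
        | succ j' =>
          have hj' : j' < k := by omega
          have hmem := Q.2.2 k hy j' hj'
          refine Multiset.mem_cons_of_mem (Multiset.mem_map.2 ⟨3 ^ j', hmem, ?_⟩)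
          rw [pow_succ]; ring⟩


lemma ins1_inj {n : ℕ} : Function.Injective (ins1 (n := n)) := by
  intro P P' h
  have h2 : (1:ℕ) ::ₘ P.1.parts = 1 ::ₘ P'.1.parts :=
    congrArg (fun R : RT (n+1) => R.1.parts) h
  exact Subtype.ext (Nat.Partition.ext ((Multiset.cons_inj_right 1).1 h2))

lemma mul3_inj {m : ℕ} : Function.Injective (mul3 (m := m)) := by
  intro Q Q' h
  have h2 : (1:ℕ) ::ₘ Q.1.parts.map (fun x => 3 * x)
      = 1 ::ₘ Q'.1.parts.map (fun x => 3 * x) :=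
    congrArg (fun R : RT (3*m+1) => R.1.parts) h
  have h3 := (Multiset.cons_inj_right 1).1 h2
  have hinj : Function.Injective (fun x : ℕ => 3 * x) := by
    intro a b hab
    dsimp only at hab
    omega
  have h4 := Multiset.map_injective hinj h3
  exact Subtype.ext (Nat.Partition.ext h4)

lemma ins1_ne_mul3 {m : ℕ} (hm : m ≠ 0) (P : RT (3 * m)) (Q : RT m) :
    ins1 P ≠ mul3 Q := by
  intro h
  have h2 : (1:ℕ) ::ₘ P.1.parts = 1 ::ₘ Q.1.parts.map (fun x => 3 * x) :=
    congrArg (fun R : RT (3*m+1) => R.1.parts) h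
  have h3 := (Multiset.cons_inj_right 1).1 h2
  have h4 : (1:ℕ) ∈ Q.1.parts.map (fun x => 3 * x) := h3 ▸ one_mem_of_ne P (by omega)
  obtain ⟨y, _, hy3⟩ := Multiset.mem_map.1 h4
  omega

lemma ins1_pre {n : ℕ} (P : RT (n + 1)) (h1 : (1:ℕ) ∈ P.1.parts)
    (hM : (1:ℕ) ∈ P.1.parts.erase 1) : ∃ P' : RT n, ins1 P' = P := by
  set M := P.1.parts.erase 1 with hMdef
  have hparts : P.1.parts = 1 ::ₘ M := (Multiset.cons_erase h1).symm
  have hsum : M.sum = n := by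
    have hs := P.1.parts_sum
    rw [hparts, Multiset.sum_cons] at hs
    omega
  refine ⟨⟨⟨M, ?_, hsum⟩, ?_, ?_⟩, ?_⟩
  · intro i hi
    exact P.1.parts_pos (Multiset.mem_of_mem_erase hi)
  · intro x hx
    exact P.2.1 x (Multiset.mem_of_mem_erase hx)
  · intro i hi j hj
    have hjp : (3:ℕ) ^ j ∈ P.1.parts := P.2.2 i (Multiset.mem_of_mem_erase hi) j hj
    rw [hparts] at hjp
    rcases Multiset.mem_cons.1 hjp with h | h
    · rw [h]; exact hM
    · exact h
  · exact Subtype.ext (Nat.Partition.ext hparts.symm)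

lemma erase_dvd {n : ℕ} (P : RT n) (hM : (1:ℕ) ∉ P.1.parts.erase 1) :
    ∀ x ∈ P.1.parts.erase 1, 3 ∣ x := by
  intro x hx
  obtain ⟨i, rfl⟩ := P.2.1 x (Multiset.mem_of_mem_erase hx)
  cases i with
  | zero => exact absurd (by simpa using hx) hM
  | succ k => exact dvd_pow_self 3 (Nat.succ_ne_zero k)

lemma mul3_pre {m : ℕ} (P : RT (3 * m + 1)) (h1 : (1:ℕ) ∈ P.1.parts)
    (hM : (1:ℕ) ∉ P.1.parts.erase 1) : ∃ Q : RT m, mul3 Q = P := by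
  set M := P.1.parts.erase 1 with hMdef
  have hparts : P.1.parts = 1 ::ₘ M := (Multiset.cons_erase h1).symm
  have hdvd : ∀ x ∈ M, 3 ∣ x := erase_dvd P hM
  have hMmap : M.map (fun x => 3 * (x / 3)) = M := by
    have h0 : M.map (fun x => 3 * (x / 3)) = M.map id :=
      Multiset.map_congr rfl (fun x hx => Nat.mul_div_cancel' (hdvd x hx))
    rw [h0, Multiset.map_id]
  set N := M.map (fun x : ℕ => x / 3) with hNdef
  have hNmap : N.map (fun x : ℕ => 3 * x) = M := by
    rw [hNdef, Multiset.map_map]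
    exact hMmap
  have hsumM : M.sum = 3 * m := by
    have hs := P.1.parts_sum
    rw [hparts, Multiset.sum_cons] at hs
    omega
  have hsumN : N.sum = m := by
    have h0 : (N.map (fun x : ℕ => 3 * x)).sum = 3 * N.sum := by
      rw [Multiset.sum_map_mul_left]
      simp [Multiset.map_id']
    rw [hNmap, hsumM] at h0
    omega
  refine ⟨⟨⟨N, ?_, hsumN⟩, ?_, ?_⟩, ?_⟩
  · intro y hy
    obtain ⟨x, hx, rfl⟩ := Multiset.mem_map.1 hy
    obtain ⟨k, rfl⟩ := hdvd x hx
    have := P.1.parts_pos (Multiset.mem_of_mem_erase hx)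
    rw [Nat.mul_div_cancel_left k (by norm_num)]
    omega
  · intro y hy
    obtain ⟨x, hx, rfl⟩ := Multiset.mem_map.1 hy
    obtain ⟨i, rfl⟩ := P.2.1 x (Multiset.mem_of_mem_erase hx)
    cases i with
    | zero => exact absurd (by simpa using hx) hM
    | succ k =>
      refine ⟨k, ?_⟩
      rw [pow_succ, Nat.mul_div_cancel _ (by norm_num)]
  · intro i hi j hj
    obtain ⟨x, hx, hxi⟩ := Multiset.mem_map.1 hi
    obtain ⟨t, rfl⟩ := P.2.1 x (Multiset.mem_of_mem_erase hx)
    cases t with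
    | zero => exact absurd (by simpa using hx) hM
    | succ k =>
      have hki : k = i := by
        refine pow3_inj ?_
        rw [← hxi, pow_succ, Nat.mul_div_cancel _ (by norm_num)]
      subst hki
      have hjp : (3:ℕ) ^ (j + 1) ∈ P.1.parts :=
        P.2.2 (k + 1) (Multiset.mem_of_mem_erase hx) (j + 1) (by omega)
      have hjM : (3:ℕ) ^ (j + 1) ∈ M := by
        rw [hparts] at hjp
        rcases Multiset.mem_cons.1 hjp with h | h
        · exact absurd (pow3_eq_one h) (by omega)
        · exact h
      refine Multiset.mem_map.2 ⟨3 ^ (j + 1), hjM, ?_⟩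
      rw [pow_succ, Nat.mul_div_cancel _ (by norm_num)]
  · refine Subtype.ext (Nat.Partition.ext ?_)
    show (1:ℕ) ::ₘ N.map (fun x => 3 * x) = P.1.parts
    rw [hNmap, ← hparts]

lemma card_zero : Nat.card (RT 0) = 1 := by
  have hsub : ∀ P : RT 0, P = emptyRT := by
    intro P
    refine Subtype.ext (Nat.Partition.ext ?_)
    show P.1.parts = 0
    by_contra hne
    obtain ⟨x, hx⟩ := Multiset.exists_mem_of_ne_zero hne
    have hx0 : x = 0 := by
      have := Multiset.sum_eq_zero_iff.1 P.1.parts_sum x hx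
      exact this
    have := P.1.parts_pos hx
    omega
  haveI : Unique (RT 0) := ⟨⟨emptyRT⟩, hsub⟩
  exact Nat.card_unique

lemma card_step (n : ℕ) :
    Nat.card (RT (n + 1)) =
      Nat.card (RT n) + (if 3 ∣ n ∧ n ≠ 0 then Nat.card (RT (n / 3)) else 0) := by
  by_cases h : 3 ∣ n ∧ n ≠ 0
  · rw [if_pos h]
    obtain ⟨⟨m, rfl⟩, hn0⟩ := h
    have hm0 : m ≠ 0 := by omega
    rw [Nat.mul_div_cancel_left m (by norm_num)]
    have hb : Function.Bijective
        (Sum.elim (ins1 (n := 3 * m)) (mul3 (m := m)) :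
          RT (3 * m) ⊕ RT m → RT (3 * m + 1)) := by
      constructor
      · rintro (P | Q) (P' | Q') hPQ
        · exact congrArg Sum.inl (ins1_inj hPQ)
        · exact absurd hPQ (ins1_ne_mul3 hm0 P Q')
        · exact absurd hPQ.symm (ins1_ne_mul3 hm0 P' Q)
        · exact congrArg Sum.inr (mul3_inj hPQ)
      · intro P
        have h1 : (1:ℕ) ∈ P.1.parts := one_mem_of_ne P (by omega)
        by_cases hMem : (1:ℕ) ∈ P.1.parts.erase 1
        · obtain ⟨P', hP'⟩ := ins1_pre P h1 hMem
          exact ⟨Sum.inl P', hP'⟩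
        · obtain ⟨Q, hQ⟩ := mul3_pre P h1 hMem
          exact ⟨Sum.inr Q, hQ⟩
    calc Nat.card (RT (3 * m + 1)) = Nat.card (RT (3 * m) ⊕ RT m) :=
          (Nat.card_eq_of_bijective _ hb).symm
      _ = Nat.card (RT (3 * m)) + Nat.card (RT m) := Nat.card_sum
  · rw [if_neg h, add_zero]
    have hb : Function.Bijective (ins1 (n := n)) := by
      refine ⟨ins1_inj, ?_⟩
      intro P
      have h1 : (1:ℕ) ∈ P.1.parts := one_mem_of_ne P (Nat.succ_ne_zero n)
      by_cases hMem : (1:ℕ) ∈ P.1.parts.erase 1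
      · exact ins1_pre P h1 hMem
      · set M := P.1.parts.erase 1 with hMdef
        have hparts : P.1.parts = 1 ::ₘ M := (Multiset.cons_erase h1).symm
        have hdvd : ∀ x ∈ M, 3 ∣ x := erase_dvd P hMem
        have hsum : M.sum = n := by
          have hs := P.1.parts_sum
          rw [hparts, Multiset.sum_cons] at hs
          omega
        have h3 : 3 ∣ n := hsum ▸ Multiset.dvd_sum hdvd
        have hn0 : n = 0 := by
          by_contra h0
          exact h ⟨h3, h0⟩
        subst hn0
        have hM0 : M = 0 := by
          rw [Multiset.eq_zero_iff_forall_notMem]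
          intro x hx
          have hx0 : x = 0 := Multiset.sum_eq_zero_iff.1 hsum x hx
          have := P.1.parts_pos (Multiset.mem_of_mem_erase hx)
          omega
        refine ⟨emptyRT, Subtype.ext (Nat.Partition.ext ?_)⟩
        show (1:ℕ) ::ₘ (0 : Multiset ℕ) = P.1.parts
        rw [hparts, hM0]
    exact (Nat.card_eq_of_bijective _ hb).symm

/-- The counting function for restricted ternary partitions. -/
def f : ℕ → ℕ
  | 0 => 1
  | n + 1 => f n + (if 3 ∣ n ∧ n ≠ 0 then f (n / 3) else 0)
decreasing_by all_goals omega

lemma f_step (n : ℕ) : f (n + 1) = f n + (if 3 ∣ n ∧ n ≠ 0 then f (n / 3) else 0) := by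
  rw [f]

lemma card_eq (n : ℕ) : Nat.card (RT n) = f n := by
  induction n using Nat.strong_induction_on with
  | _ n ih =>
    match n with
    | 0 => rw [card_zero]; simp [f]
    | (k + 1) =>
      rw [card_step k, f_step, ih k (by omega)]
      by_cases h : 3 ∣ k ∧ k ≠ 0
      · rw [if_pos h, if_pos h, ih (k / 3) (by omega)]
      · rw [if_neg h, if_neg h]

/-- `F k = f (3k+1)`. -/
def F (k : ℕ) : ℕ := f (3 * k + 1)

/-- Partial sums of `F`. -/
def Sf (t : ℕ) : ℕ := ∑ m ∈ Finset.range t, F m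

lemma f_succ_eq (k : ℕ) : f (k + 1) = F (k / 3) := by
  have h3 : k = 3 * (k / 3) ∨ k = 3 * (k / 3) + 1 ∨ k = 3 * (k / 3) + 2 := by omega
  set q := k / 3 with hq
  rcases h3 with h | h | h
  · rw [h]; rfl
  · rw [h, f_step, if_neg (by omega)]
    simp [F]
  · rw [h, f_step, if_neg (by omega)]
    rw [show 3 * q + 2 = 3 * q + 1 + 1 by omega, f_step, if_neg (by omega)]
    simp [F]

lemma hF (k : ℕ) : F (k + 1) = F k + F (k / 3) := by
  have h1 : F (k + 1) = f (3 * k + 2 + 1) + f (k + 1) := by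
    show f (3 * (k + 1) + 1) = _
    rw [show 3 * (k + 1) + 1 = (3 * k + 3) + 1 by ring, f_step,
      if_pos (show 3 ∣ 3 * k + 3 ∧ 3 * k + 3 ≠ 0 from by constructor <;> omega),
      show (3 * k + 3) / 3 = k + 1 by omega, show 3 * k + 3 = 3 * k + 2 + 1 by omega]
  rw [h1, f_succ_eq, f_succ_eq, show (3 * k + 2) / 3 = k by omega]

lemma hF3 : ∀ t, F (3 * t) = 1 + 3 * Sf t := by
  intro t
  induction t with
  | zero =>
    show f 1 = _
    rw [show (1:ℕ) = 0 + 1 from rfl, f_step]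
    simp [Sf, f]
  | succ t iht =>
    have e1 : F (3 * t + 1) = F (3 * t) + F t := by
      rw [hF, show 3 * t / 3 = t by omega]
    have e2 : F (3 * t + 2) = F (3 * t + 1) + F t := by
      rw [show 3 * t + 2 = (3 * t + 1) + 1 by omega, hF, show (3 * t + 1) / 3 = t by omega]
    have e3 : F (3 * (t + 1)) = F (3 * t + 2) + F t := by
      rw [show 3 * (t + 1) = (3 * t + 2) + 1 by ring, hF, show (3 * t + 2) / 3 = t by omega]
    have e4 : Sf (t + 1) = Sf t + F t := Finset.sum_range_succ F t
    omega

lemma hS3 : ∀ u, ∃ a, Sf (3 * u) = 3 * a := by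
  intro u
  induction u with
  | zero => exact ⟨0, by simp [Sf]⟩
  | succ u ihu =>
    obtain ⟨a, ha⟩ := ihu
    have e1 : F (3 * u + 1) = F (3 * u) + F u := by
      rw [hF, show 3 * u / 3 = u by omega]
    have e2 : F (3 * u + 2) = F (3 * u + 1) + F u := by
      rw [show 3 * u + 2 = (3 * u + 1) + 1 by omega, hF, show (3 * u + 1) / 3 = u by omega]
    have e3 : Sf (3 * (u + 1)) = Sf (3 * u) + F (3 * u) + F (3 * u + 1) + F (3 * u + 2) := by
      rw [show 3 * (u + 1) = ((3 * u + 1) + 1) + 1 by ring]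
      show (∑ m ∈ Finset.range _, F m) = _
      rw [Finset.sum_range_succ, Finset.sum_range_succ, Finset.sum_range_succ]
      rfl
    exact ⟨a + F (3 * u) + F u, by omega⟩

lemma f_div (n : ℕ) : ∃ c, f (81 * n + 36) = 9 * c := by
  have h1 : f (81 * n + 36) = F (27 * n + 11) := by
    rw [show 81 * n + 36 = (81 * n + 35) + 1 by omega, f_succ_eq,
      show (81 * n + 35) / 3 = 27 * n + 11 by omega]
  have h2 : F (27 * n + 11) = F (27 * n + 10) + F (9 * n + 3) := by
    rw [show 27 * n + 11 = (27 * n + 10) + 1 by omega, hF,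
      show (27 * n + 10) / 3 = 9 * n + 3 by omega]
  have h3 : F (27 * n + 10) = F (27 * n + 9) + F (9 * n + 3) := by
    rw [show 27 * n + 10 = (27 * n + 9) + 1 by omega, hF,
      show (27 * n + 9) / 3 = 9 * n + 3 by omega]
  have h4 : F (27 * n + 9) = 1 + 3 * Sf (9 * n + 3) := by
    rw [show 27 * n + 9 = 3 * (9 * n + 3) by ring, hF3]
  have h5 : F (9 * n + 3) = 1 + 3 * Sf (3 * n + 1) := by
    rw [show 9 * n + 3 = 3 * (3 * n + 1) by ring, hF3]
  obtain ⟨a, ha⟩ : ∃ a, Sf (9 * n + 3) = 3 * a := by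
    rw [show 9 * n + 3 = 3 * (3 * n + 1) by ring]
    exact hS3 _
  obtain ⟨b, hb⟩ := hS3 n
  have h6 : Sf (3 * n + 1) = Sf (3 * n) + F (3 * n) := Finset.sum_range_succ F (3 * n)
  have h7 : F (3 * n) = 1 + 3 * Sf n := hF3 n
  exact ⟨1 + a + 2 * b + 2 * Sf n, by omega⟩

end Stmt12Aux

theorem stmt_12 (n : ℕ) :
    restrictedMaryCount 3 (81 * n + 27 + 9) ≡ 0 [MOD 9] := by
  rw [show 81 * n + 27 + 9 = 81 * n + 36 by omega, Nat.modEq_zero_iff_dvd,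
    Stmt12Aux.rmc_eq, Stmt12Aux.card_eq]
  obtain ⟨c, hc⟩ := Stmt12Aux.f_div n
  exact ⟨c, hc⟩
end
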